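/- arXiv:2210.16172 — 5 statements merged into one kernel-verified Lean document; each statement's English description precedes it below -/
import Mathlib

section
/- Define g(x) := (x² − 6x + 12)eˣ − (x² + 6x + 12). Then g(x) > 0 for all x > 0. -/
noncomputable def g (x : ℝ) : ℝ := (x^2 - 6*x + 12) * Real.exp x - (x^2 + 6*x + 12)

/-! (x² + 6x + 12)/(x² − 6x + 12) is the [2/2] Padé approximant of eˣ, so multiplying the
degree-5 Taylor polynomial of eˣ by x² − 6x + 12 reproduces x² + 6x + 12 up to the terms
x⁵(x² − x + 2)/120, which are positive for x > 0. Since x² − 6x + 12 > 0 and eˣ dominates its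
Taylor polynomials on [0, ∞), this lower bound passes to g. -/

open Finset

lemma sq_sub_six_mul_add_twelve_pos (x : ℝ) : 0 < x^2 - 6*x + 12 := by
  nlinarith [sq_nonneg (x - 3)]

lemma sq_sub_self_add_two_pos (x : ℝ) : 0 < x^2 - x + 2 := by
  nlinarith [sq_nonneg (x - 1)]

lemma mul_taylor_exp_sub_eq (x : ℝ) :
    (x^2 - 6*x + 12) * ∑ i ∈ range 6, x^i / i.factorial - (x^2 + 6*x + 12)
      = x^5 * (x^2 - x + 2) / 120 := by
  simp only [sum_range_succ, sum_range_zero, Nat.factorial]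
  push_cast
  ring

theorem g_pos : ∀ x : ℝ, 0 < x → 0 < g x := by
  intro x hx
  have hTaylor : ∑ i ∈ range 6, x^i / i.factorial ≤ Real.exp x :=
    Real.sum_le_exp_of_nonneg hx.le 6
  have hRemainder : 0 < x^5 * (x^2 - x + 2) / 120 := by
    have := sq_sub_self_add_two_pos x
    positivity
  calc 0 < x^5 * (x^2 - x + 2) / 120 := hRemainder
    _ = (x^2 - 6*x + 12) * ∑ i ∈ range 6, x^i / i.factorial - (x^2 + 6*x + 12) :=
        (mul_taylor_exp_sub_eq x).symm
    _ ≤ g x := by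
        unfold g
        gcongr
        exact (sq_sub_six_mul_add_twelve_pos x).le
end

section
/- Let a, b, c be real numbers with a + b = −c, c > 0, a ≥ b (so b ≤ −c/2 < 0). Define r(x) := (b x + c)eˣ + a x − c. Then r(x) < 0 for all x > 0. -/
/-! Since `a + b + c = 0`, `r` vanishes to second order at `0`, and
`r'' x = (b x + 2 b + c) eˣ` is negative for `x > 0` because `b < 0` and `2 b + c ≤ 0`.
So `r'` decreases from `r' 0 = 0`, hence `r` decreases from `r 0 = 0`. -/

noncomputable def r (a b c x : ℝ) : ℝ := (b * x + c) * Real.exp x + a * x - c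

open Set Real

theorem strictAntiOn_Ici_of_hasDerivAt_neg {f f' : ℝ → ℝ} {a : ℝ}
    (hf : ∀ x ≥ a, HasDerivAt f (f' x) x) (hneg : ∀ x > a, f' x < 0) :
    StrictAntiOn f (Ici a) := by
  refine strictAntiOn_of_hasDerivWithinAt_neg (f' := f') (convex_Ici a)
    (fun x hx => (hf x hx).continuousAt.continuousWithinAt) (fun x hx => ?_) (fun x hx => ?_)
  · rw [interior_Ici] at hx
    exact (hf x (le_of_lt hx)).hasDerivWithinAt
  · rw [interior_Ici] at hx
    exact hneg x hx

theorem lt_of_hasDerivAt_of_second_deriv_neg {f f' f'' : ℝ → ℝ} {a x : ℝ}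
    (hf : ∀ y ≥ a, HasDerivAt f (f' y) y) (hf' : ∀ y ≥ a, HasDerivAt f' (f'' y) y)
    (hcrit : f' a = 0) (hneg : ∀ y > a, f'' y < 0) (hx : a < x) :
    f x < f a := by
  have hf'_neg : ∀ y > a, f' y < 0 := fun y hy =>
    hcrit ▸ strictAntiOn_Ici_of_hasDerivAt_neg hf' hneg self_mem_Ici (le_of_lt hy) hy
  exact strictAntiOn_Ici_of_hasDerivAt_neg hf hf'_neg self_mem_Ici (le_of_lt hx) hx

theorem hasDerivAt_r (a b c x : ℝ) :
    HasDerivAt (r a b c) ((b * x + b + c) * exp x + a) x := by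
  have h := (((((hasDerivAt_id' x).const_mul b).add_const c).mul (hasDerivAt_exp x)).add
    ((hasDerivAt_id' x).const_mul a)).sub_const c
  exact h.congr_deriv (by ring)

theorem hasDerivAt_deriv_r (a b c x : ℝ) :
    HasDerivAt (fun y => (b * y + b + c) * exp y + a) ((b * x + 2 * b + c) * exp x) x := by
  have h := ((((hasDerivAt_id' x).const_mul b).add_const b).add_const c).mul
    (hasDerivAt_exp x) |>.add_const a
  exact h.congr_deriv (by ring)

theorem r_neg (a b c : ℝ) (hsum : a + b = -c) (hc : 0 < c) (hab : b ≤ a) :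
    ∀ x : ℝ, 0 < x → r a b c x < 0 := by
  intro x hx
  have hcrit : (b * 0 + b + c) * exp 0 + a = 0 := by
    simp only [mul_zero, zero_add, exp_zero, mul_one]
    linarith
  have hconcave : ∀ y > 0, (b * y + 2 * b + c) * exp y < 0 := fun y hy =>
    mul_neg_of_neg_of_pos (by nlinarith) (exp_pos y)
  have hr0 : r a b c 0 = 0 := by simp [r]
  simpa only [hr0] using lt_of_hasDerivAt_of_second_deriv_neg
    (fun y _ => hasDerivAt_r a b c y) (fun y _ => hasDerivAt_deriv_r a b c y) hcrit hconcave hx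
end

section
/- With f as the density f(x) = (λᵢμ)/(a−b)·(e^{ax} − e^{bx}) on x ≥ 0 (a > b the negative roots of s² + (λ+μ)s + λᵢμ = 0), the second moment is ∫₀^∞ x² f(x) dx = 2(λ+μ)²/(λᵢ²μ²) − 2/(λᵢμ), and hence the variance equals (λ+μ)²/(λᵢ²μ²) − 2/(λᵢμ). -/
/-!
Since `a, b` are the distinct roots of `s² + (λ+μ)s + λᵢμ`, Vieta gives `a + b = -(λ+μ)` and
`ab = λᵢμ`, so `f` is the hypoexponential density with rates `-a` and `-b`. Its moments follow
termwise from `∫₀^∞ xⁿ e^{ax} dx = n!/(-a)ⁿ⁺¹`, a Gamma integral.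
-/

open MeasureTheory Real Set
open scoped Nat

lemma integral_pow_mul_exp_mul_Ioi (n : ℕ) {a : ℝ} (ha : a < 0) :
    ∫ x in Ioi (0 : ℝ), x ^ n * exp (a * x) = n ! / (-a) ^ (n + 1) := by
  have hGamma := integral_rpow_mul_exp_neg_mul_Ioi (a := n + 1) (by positivity) (neg_pos.mpr ha)
  simp only [add_sub_cancel_right, rpow_natCast, neg_mul, neg_neg] at hGamma
  rw [hGamma, Gamma_nat_eq_factorial, ← Nat.cast_succ, rpow_natCast, div_pow, one_pow,
    one_div_mul_eq_div]

lemma integrableOn_pow_mul_exp_mul_Ioi (n : ℕ) {a : ℝ} (ha : a < 0) :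
    IntegrableOn (fun x ↦ x ^ n * exp (a * x)) (Ioi 0) :=
  -- the Bochner integral of a non-integrable function is `0`
  .of_integral_ne_zero <| by
    rw [integral_pow_mul_exp_mul_Ioi n ha]
    have : 0 < -a := neg_pos.mpr ha
    positivity

lemma integral_pow_mul_const_mul_exp_sub_exp_Ioi (n : ℕ) (c : ℝ) {a b : ℝ}
    (ha : a < 0) (hb : b < 0) :
    ∫ x in Ioi (0 : ℝ), x ^ n * (c * (exp (a * x) - exp (b * x)))
      = c * (n ! / (-a) ^ (n + 1) - n ! / (-b) ^ (n + 1)) := by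
  simp_rw [mul_left_comm (_ ^ n) c, mul_sub (_ ^ n)]
  rw [integral_const_mul, integral_sub (integrableOn_pow_mul_exp_mul_Ioi n ha)
    (integrableOn_pow_mul_exp_mul_Ioi n hb), integral_pow_mul_exp_mul_Ioi n ha,
    integral_pow_mul_exp_mul_Ioi n hb]

section Hypoexponential

variable {a b : ℝ} (hab : a ≠ b) (ha : a < 0) (hb : b < 0)
include hab ha hb

lemma integral_mul_hypoexponential_density :
    ∫ x in Ioi (0 : ℝ), x * (a * b / (a - b) * (exp (a * x) - exp (b * x)))
      = -(a + b) / (a * b) := by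
  have h := integral_pow_mul_const_mul_exp_sub_exp_Ioi 1 (a * b / (a - b)) ha hb
  simp only [pow_one] at h
  rw [h]
  field_simp [sub_ne_zero.mpr hab, ha.ne, hb.ne]
  ring

lemma integral_sq_mul_hypoexponential_density :
    ∫ x in Ioi (0 : ℝ), x ^ 2 * (a * b / (a - b) * (exp (a * x) - exp (b * x)))
      = 2 * ((a + b) ^ 2 - a * b) / (a * b) ^ 2 := by
  rw [integral_pow_mul_const_mul_exp_sub_exp_Ioi 2 _ ha hb]
  field_simp [sub_ne_zero.mpr hab, ha.ne, hb.ne]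
  ring

end Hypoexponential

lemma add_eq_neg_and_mul_eq_of_quadratic_roots {p q a b : ℝ} (hab : a ≠ b)
    (ha : a ^ 2 + p * a + q = 0) (hb : b ^ 2 + p * b + q = 0) :
    a + b = -p ∧ a * b = q := by
  have hsum : a + b = -p := by
    have : (a - b) * (a + b + p) = 0 := by linear_combination ha - hb
    linarith [(mul_eq_zero.mp this).resolve_left (sub_ne_zero.mpr hab)]
  exact ⟨hsum, by linear_combination a * hsum - ha⟩

theorem aoi_second_moment_and_variance_general (lam mu li a b : ℝ)
    (hra : a^2 + (lam + mu) * a + li * mu = 0)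
    (hrb : b^2 + (lam + mu) * b + li * mu = 0)
    (hab : b < a) (ha : a < 0) (hb : b < 0) :
    (∫ x in Set.Ioi (0:ℝ),
        x^2 * (li * mu / (a - b) * (Real.exp (a * x) - Real.exp (b * x)))
      = 2 * (lam + mu)^2 / (li^2 * mu^2) - 2 / (li * mu)) ∧
    ((∫ x in Set.Ioi (0:ℝ),
        x^2 * (li * mu / (a - b) * (Real.exp (a * x) - Real.exp (b * x))))
      - (∫ x in Set.Ioi (0:ℝ),
          x * (li * mu / (a - b) * (Real.exp (a * x) - Real.exp (b * x))))^2
      = (lam + mu)^2 / (li^2 * mu^2) - 2 / (li * mu)) := by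
  obtain ⟨hsum, hprod⟩ := add_eq_neg_and_mul_eq_of_quadratic_roots hab.ne' hra hrb
  rw [← mul_pow, ← hprod, ← neg_neg (lam + mu), ← hsum,
    integral_sq_mul_hypoexponential_density hab.ne' ha hb,
    integral_mul_hypoexponential_density hab.ne' ha hb]
  have hab0 : a * b ≠ 0 := mul_ne_zero ha.ne hb.ne
  constructor
  · field_simp
  · field_simp
    ring

theorem aoi_second_moment_and_variance (lam mu li a b : ℝ)
    (hlam : 0 < lam) (hmu : 0 < mu) (hli : 0 < li)
    (hra : a^2 + (lam + mu) * a + li * mu = 0)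
    (hrb : b^2 + (lam + mu) * b + li * mu = 0)
    (hab : b < a) (ha : a < 0) (hb : b < 0) :
    (∫ x in Set.Ioi (0:ℝ),
        x^2 * (li * mu / (a - b) * (Real.exp (a * x) - Real.exp (b * x)))
      = 2 * (lam + mu)^2 / (li^2 * mu^2) - 2 / (li * mu)) ∧
    ((∫ x in Set.Ioi (0:ℝ),
        x^2 * (li * mu / (a - b) * (Real.exp (a * x) - Real.exp (b * x))))
      - (∫ x in Set.Ioi (0:ℝ),
          x * (li * mu / (a - b) * (Real.exp (a * x) - Real.exp (b * x))))^2
      = (lam + mu)^2 / (li^2 * mu^2) - 2 / (li * mu)) :=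
  aoi_second_moment_and_variance_general lam mu li a b hra hrb hab ha hb
end

section
/- For x ≥ 0 and a > b negative reals with a + b = −(λ+μ), ab = λᵢμ, the function x ↦ (λ+μ)(e^{−(λ+μ)x} + (b e^{bx} − a e^{ax})/(a − b)), extended by 0 for x < 0, is a probability density function (nonnegative with total integral 1). -/
open MeasureTheory

noncomputable def paoiPdf (lam mu a b : ℝ) (x : ℝ) : ℝ :=
  if 0 ≤ x then
    (lam + mu) * (Real.exp (-(lam + mu) * x)
      + (b * Real.exp (b * x) - a * Real.exp (a * x)) / (a - b))
  else 0

/-!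
Since `a + b = -(lam + mu)`, on `x ≥ 0` the density equals
`-(a + b) * e^{(a+b)x} * ((a - b) + b e^{-ax} - a e^{-bx}) / (a - b)`, and with `p = -a < q = -b`
the last factor is `(q - p) + p e^{qx} - q e^{px} ≥ 0` by convexity of `exp`, since
`p x = (p/q) (q x) + (1 - p/q) 0`. The integral is a combination of `∫₀^∞ e^{cx} dx = -1/c`,
and the `a`- and `b`-terms cancel.
-/

open Real Set

lemma mul_exp_mul_le_mul_exp_mul_add_sub {p q : ℝ} (hp : 0 < p) (hpq : p ≤ q) (t : ℝ) :
    q * exp (p * t) ≤ p * exp (q * t) + (q - p) := by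
  have hq : 0 < q := hp.trans_le hpq
  have hconv := convexOn_exp.2 (mem_univ (q * t)) (mem_univ 0)
    (div_nonneg hp.le hq.le) (sub_nonneg.2 ((div_le_one hq).2 hpq)) (add_sub_cancel _ _)
  have hpt : p / q * (q * t) + (1 - p / q) * 0 = p * t := by
    rw [mul_zero, add_zero]; field_simp
  rw [smul_eq_mul, smul_eq_mul, smul_eq_mul, smul_eq_mul, hpt, exp_zero] at hconv
  calc q * exp (p * t) ≤ q * (p / q * exp (q * t) + (1 - p / q) * 1) := by gcongr
    _ = p * exp (q * t) + (q - p) := by field_simp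

lemma paoiPdf_nonneg {lam mu a b : ℝ} (hab : b < a) (ha : a < 0) (hsum : a + b = -(lam + mu))
    (x : ℝ) : 0 ≤ paoiPdf lam mu a b x := by
  unfold paoiPdf
  split_ifs with hx
  · have hab_pos : 0 < a - b := sub_pos.2 hab
    have hconv := mul_exp_mul_le_mul_exp_mul_add_sub (neg_pos.2 ha) (neg_le_neg hab.le) x
    have hfactor : exp ((a + b) * x) + (b * exp (b * x) - a * exp (a * x)) / (a - b)
        = exp ((a + b) * x) * ((a - b) + b * exp (-a * x) - a * exp (-b * x)) / (a - b) := by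
      have hexp_b : exp (b * x) = exp ((a + b) * x) * exp (-a * x) := by
        rw [← exp_add]; ring_nf
      have hexp_a : exp (a * x) = exp ((a + b) * x) * exp (-b * x) := by
        rw [← exp_add]; ring_nf
      rw [hexp_b, hexp_a]; field_simp; ring
    rw [← hsum, hfactor]
    refine mul_nonneg (by linarith) (div_nonneg (mul_nonneg (exp_pos _).le ?_) hab_pos.le)
    linarith
  · exact le_rfl

lemma integral_paoiPdf {lam mu a b : ℝ} (hab : b < a) (ha : a < 0) (hsum : a + b = -(lam + mu)) :
    ∫ x in Ioi (0:ℝ), paoiPdf lam mu a b x = 1 := by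
  have hb : b < 0 := hab.trans ha
  have hapb : a + b < 0 := by linarith
  have hexp {c : ℝ} (hc : c < 0) : ∫ x in Ioi (0:ℝ), exp (c * x) = -c⁻¹ := by
    simp [integral_exp_mul_Ioi hc, neg_div]
  have hint {c : ℝ} (hc : c < 0) := integrableOn_exp_mul_Ioi hc 0
  calc ∫ x in Ioi (0:ℝ), paoiPdf lam mu a b x
      = ∫ x in Ioi (0:ℝ), (lam + mu) * (exp ((a + b) * x)
          + (b * exp (b * x) - a * exp (a * x)) / (a - b)) :=
        setIntegral_congr_fun measurableSet_Ioi fun x hx => by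
          rw [paoiPdf, if_pos (le_of_lt hx), hsum]
    _ = (lam + mu) * (-(a + b)⁻¹ + (b * -b⁻¹ - a * -a⁻¹) / (a - b)) := by
        rw [integral_const_mul, integral_add (hint hapb), integral_div, integral_sub,
          integral_const_mul, integral_const_mul, hexp hapb, hexp hb, hexp ha]
        · exact (hint hb).const_mul b
        · exact (hint ha).const_mul a
        · exact ((hint hb).const_mul b).sub ((hint ha).const_mul a) |>.div_const _
    _ = 1 := by
        have hlm : lam + mu ≠ 0 := by linarith
        rw [hsum]
        field_simp [ha.ne, hb.ne]
        ring

theorem paoiPdf_isPdf_general (lam mu a b : ℝ)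
    (hab : b < a) (ha : a < 0)
    (hsum : a + b = -(lam + mu)) :
    (∀ x, 0 ≤ paoiPdf lam mu a b x) ∧
    ∫ x in Set.Ioi (0:ℝ), paoiPdf lam mu a b x = 1 :=
  ⟨paoiPdf_nonneg hab ha hsum, integral_paoiPdf hab ha hsum⟩

theorem paoiPdf_isPdf (lam mu li a b : ℝ) (hlam : 0 < lam) (hmu : 0 < mu) (hli : 0 < li)
    (hab : b < a) (ha : a < 0) (hb : b < 0)
    (hsum : a + b = -(lam + mu)) (hprod : a * b = li * mu) :
    (∀ x, 0 ≤ paoiPdf lam mu a b x) ∧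
    ∫ x in Set.Ioi (0:ℝ), paoiPdf lam mu a b x = 1 :=
  paoiPdf_isPdf_general lam mu a b hab ha hsum
end

section
/- With the PAoI density f_P(x) = (λ+μ)(e^{−(λ+μ)x} + (b e^{bx} − a e^{ax})/(a−b)) on x ≥ 0 (a > b negative, a+b = −(λ+μ), ab = λᵢμ), the mean is ∫₀^∞ x f_P(x) dx = 1/(λ+μ) + (λ+μ)/(λᵢμ). -/
open MeasureTheory Real Set

/-!
Write `L = λ + μ`. The density is `L e^{-Lx} + L g(x)` with `g(x) = (b e^{bx} - a e^{ax}) / (a - b)`,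
and `∫₀^∞ x e^{cx} dx = 1 / c²` for `c < 0`. Hence the first term contributes `L / L² = 1 / L`
and `g` contributes `(1/b - 1/a) / (a - b) = 1 / (ab) = 1 / (λᵢ μ)`.
-/

lemma integrableOn_mul_exp_Ioi {c : ℝ} (hc : c < 0) :
    IntegrableOn (fun x => x * exp (c * x)) (Ioi 0) := by
  have h := integrableOn_rpow_mul_exp_neg_mul_rpow (p := 1) (s := 1) (b := -c)
    (by norm_num) one_pos (neg_pos.mpr hc)
  refine h.congr_fun (fun x _ => ?_) measurableSet_Ioi
  simp only [rpow_one, neg_neg]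

lemma integral_mul_exp_Ioi {c : ℝ} (hc : c < 0) :
    ∫ x in Ioi 0, x * exp (c * x) = 1 / c ^ 2 := by
  have h := integral_rpow_mul_exp_neg_mul_Ioi (a := 2) (r := -c) (by norm_num) (neg_pos.mpr hc)
  norm_num [Gamma_two] at h
  rw [h, one_div]

section

variable {a b : ℝ}

lemma mul_exp_sub_exp_div_eq (x : ℝ) :
    x * ((b * exp (b * x) - a * exp (a * x)) / (a - b))
      = b / (a - b) * (x * exp (b * x)) - a / (a - b) * (x * exp (a * x)) := by
  ring

lemma integrableOn_mul_exp_sub_exp_div_Ioi (ha : a < 0) (hb : b < 0) :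
    IntegrableOn (fun x => x * ((b * exp (b * x) - a * exp (a * x)) / (a - b))) (Ioi 0) := by
  simp_rw [mul_exp_sub_exp_div_eq]
  exact ((integrableOn_mul_exp_Ioi hb).const_mul _).sub ((integrableOn_mul_exp_Ioi ha).const_mul _)

lemma integral_mul_exp_sub_exp_div_Ioi (ha : a < 0) (hb : b < 0) (hab : a ≠ b) :
    ∫ x in Ioi 0, x * ((b * exp (b * x) - a * exp (a * x)) / (a - b)) = 1 / (a * b) := by
  simp_rw [mul_exp_sub_exp_div_eq]
  rw [integral_sub ((integrableOn_mul_exp_Ioi hb).const_mul _)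
      ((integrableOn_mul_exp_Ioi ha).const_mul _),
    integral_const_mul, integral_const_mul, integral_mul_exp_Ioi ha, integral_mul_exp_Ioi hb]
  have : a - b ≠ 0 := sub_ne_zero.mpr hab
  have : a ≠ 0 := ha.ne
  have : b ≠ 0 := hb.ne
  field_simp

end

theorem paoi_mean_general (lam mu li a b : ℝ) (hlam : 0 < lam) (hmu : 0 < mu)
    (hab : b < a) (ha : a < 0) (hb : b < 0)
    (hprod : a * b = li * mu) :
    ∫ x in Set.Ioi (0:ℝ),
        x * ((lam + mu) * (Real.exp (-(lam + mu) * x)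
          + (b * Real.exp (b * x) - a * Real.exp (a * x)) / (a - b)))
      = 1 / (lam + mu) + (lam + mu) / (li * mu) := by
  set L := lam + mu
  have hL : -L < 0 := by linarith
  simp_rw [mul_left_comm _ L, mul_add]
  rw [integral_add ((integrableOn_mul_exp_Ioi hL).const_mul L)
      ((integrableOn_mul_exp_sub_exp_div_Ioi ha hb).const_mul L),
    integral_const_mul, integral_const_mul, integral_mul_exp_Ioi hL,
    integral_mul_exp_sub_exp_div_Ioi ha hb hab.ne', hprod]
  field_simp

theorem paoi_mean (lam mu li a b : ℝ) (hlam : 0 < lam) (hmu : 0 < mu) (hli : 0 < li)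
    (hab : b < a) (ha : a < 0) (hb : b < 0)
    (hsum : a + b = -(lam + mu)) (hprod : a * b = li * mu) :
    ∫ x in Set.Ioi (0:ℝ),
        x * ((lam + mu) * (Real.exp (-(lam + mu) * x)
          + (b * Real.exp (b * x) - a * Real.exp (a * x)) / (a - b)))
      = 1 / (lam + mu) + (lam + mu) / (li * mu) :=
  paoi_mean_general lam mu li a b hlam hmu hab ha hb hprod
end
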